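/- (Theorem 1, first relation.) Let u, p be a smooth solution of the incompressible Euler equations and let ω = curl u. At every point (t,x) where ω ≠ 0, the quaternion identity [0, Dω/Dt] = [α, χ] * [0, ω] holds, where α = ω̂·Sω̂ and χ = ω̂×Sω̂; i.e., the vorticity tetrad 𝔴 = [0,ω] satisfies D𝔴/Dt = 𝔮 ⊛ 𝔴 with 𝔮 = [α,χ]. -/

import Mathlib

noncomputable section

open scoped BigOperators

/-- Space-time: a point is a pair (t, x) with t ∈ ℝ, x ∈ ℝ³. -/
abbrev Pt : Type := ℝ × (Fin 3 → ℝ)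

/-- Euclidean dot product on ℝ³. -/
def dot3 (a b : Fin 3 → ℝ) : ℝ := a 0 * b 0 + a 1 * b 1 + a 2 * b 2

/-- Cross product on ℝ³. -/
def cross3 (a b : Fin 3 → ℝ) : Fin 3 → ℝ :=
  ![a 1 * b 2 - a 2 * b 1, a 2 * b 0 - a 0 * b 2, a 0 * b 1 - a 1 * b 0]

/-- Euclidean norm on ℝ³. -/
def norm3 (a : Fin 3 → ℝ) : ℝ := Real.sqrt (dot3 a a)

/-- The quaternion `[s, r]` with scalar part `s` and vector part `r`. -/
def quat (s : ℝ) (r : Fin 3 → ℝ) : Quaternion ℝ := ⟨s, r 0, r 1, r 2⟩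

/-- Material derivative `∂ₜ f + (a·∇)f` of a scalar field `f` along the
velocity field `a`, at the point `z`. -/
def mder (a : Pt → Fin 3 → ℝ) (f : Pt → ℝ) (z : Pt) : ℝ :=
  fderiv ℝ f z ((1 : ℝ), a z)

/-- Spatial partial derivative `∂f/∂xᵢ`. -/
def pd (i : Fin 3) (f : Pt → ℝ) (z : Pt) : ℝ :=
  fderiv ℝ f z ((0 : ℝ), Pi.single i 1)

/-- The vorticity `ω = curl u`. -/
def vort (u : Pt → Fin 3 → ℝ) (z : Pt) : Fin 3 → ℝ :=
  ![pd 1 (fun q => u q 2) z - pd 2 (fun q => u q 1) z,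
    pd 2 (fun q => u q 0) z - pd 0 (fun q => u q 2) z,
    pd 0 (fun q => u q 1) z - pd 1 (fun q => u q 0) z]

/-- The unit vorticity `ω̂ = ω/|ω|`. -/
def vortHat (u : Pt → Fin 3 → ℝ) (z : Pt) : Fin 3 → ℝ :=
  (norm3 (vort u z))⁻¹ • vort u z

/-- The strain matrix `S = ½(∇u + (∇u)ᵀ)` applied to a vector `v`. -/
def strainVec (u : Pt → Fin 3 → ℝ) (z : Pt) (v : Fin 3 → ℝ) : Fin 3 → ℝ :=
  fun i => ∑ j : Fin 3,
    ((pd j (fun q => u q i) z + pd i (fun q => u q j) z) / 2) * v j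

/-- The stretching rate `α = ω̂·Sω̂`. -/
def alphaF (u : Pt → Fin 3 → ℝ) (z : Pt) : ℝ :=
  dot3 (vortHat u z) (strainVec u z (vortHat u z))

/-- The swing rate `χ = ω̂×Sω̂`. -/
def chiF (u : Pt → Fin 3 → ℝ) (z : Pt) : Fin 3 → ℝ :=
  cross3 (vortHat u z) (strainVec u z (vortHat u z))

/-! ### Auxiliary calculus lemmas -/

lemma smooth_dv (f : Pt → ℝ) (hf : ContDiff ℝ (⊤ : ℕ∞) f) (v : Pt) :
    ContDiff ℝ (⊤ : ℕ∞) (fun z => fderiv ℝ f z v) :=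
  (hf.fderiv_right (by simp)).clm_apply contDiff_const

/-- Symmetry of second derivatives for smooth functions. -/
lemma dv_comm (f : Pt → ℝ) (hf : ContDiff ℝ (⊤ : ℕ∞) f) (z v w : Pt) :
    fderiv ℝ (fun y => fderiv ℝ f y v) z w = fderiv ℝ (fun y => fderiv ℝ f y w) z v := by
  have hdf : Differentiable ℝ (fderiv ℝ f) :=
    (hf.fderiv_right (m := 1) (WithTop.coe_le_coe.mpr le_top)).differentiable one_ne_zero
  have h1 : ∀ v w : Pt, fderiv ℝ (fun y => fderiv ℝ f y v) z w
      = fderiv ℝ (fderiv ℝ f) z w v := by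
    intro v w
    rw [fderiv_clm_apply (hdf z) (differentiableAt_const v)]
    simp
  rw [h1 v w, h1 w v]
  exact second_derivative_symmetric
    (fun y => ((hf.differentiable (by simp)) y).hasFDerivAt) ((hdf z).hasFDerivAt) w v

/-- The material derivative as time derivative plus advective terms. -/
lemma mder_expand (u : Pt → Fin 3 → ℝ) (f : Pt → ℝ) (z : Pt) :
    mder u f z = fderiv ℝ f z ((1:ℝ), (0:Fin 3 → ℝ)) + ∑ j : Fin 3, u z j * pd j f z := by
  have key : ((1:ℝ), u z) = ((1:ℝ), (0:Fin 3 → ℝ))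
      + ∑ j : Fin 3, u z j • (((0:ℝ), Pi.single j (1:ℝ)) : Pt) := by
    refine Prod.ext ?_ ?_
    · simp [Prod.fst_sum]
    · simp [Prod.snd_sum, ← Pi.single_smul, Finset.univ_sum_single]
  rw [mder, key, map_add, map_sum]
  congr 1
  refine Finset.sum_congr rfl fun x _ => ?_
  rw [map_smul]
  rfl

/-- Leibniz rule for directional derivatives. -/
lemma dv_mul (f g : Pt → ℝ) (z v : Pt) (hf : DifferentiableAt ℝ f z)
    (hg : DifferentiableAt ℝ g z) :
    fderiv ℝ (fun y => f y * g y) z v = fderiv ℝ f z v * g z + f z * fderiv ℝ g z v := by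
  rw [fderiv_fun_mul hf hg]
  simp only [ContinuousLinearMap.add_apply, ContinuousLinearMap.smul_apply, smul_eq_mul]
  ring

/-- Commuting the material derivative with a spatial partial derivative. -/
lemma pd_mder (u : Pt → Fin 3 → ℝ) (hu : ContDiff ℝ (⊤ : ℕ∞) u) (f : Pt → ℝ)
    (hf : ContDiff ℝ (⊤ : ℕ∞) f) (i : Fin 3) (z : Pt) :
    pd i (fun y => mder u f y) z
      = mder u (pd i f) z + ∑ j : Fin 3, pd i (fun q => u q j) z * pd j f z := by
  have huj : ∀ j, ContDiff ℝ (⊤ : ℕ∞) (fun q => u q j) := fun j => contDiff_pi.mp hu j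
  have hdvf : ∀ v : Pt, ContDiff ℝ (⊤ : ℕ∞) (fun y => fderiv ℝ f y v) := smooth_dv f hf
  have hm : (fun y => mder u f y)
      = fun y => fderiv ℝ f y ((1:ℝ), (0:Fin 3 → ℝ)) + ∑ j : Fin 3, u y j * pd j f y :=
    funext fun y => mder_expand u f y
  rw [hm]
  unfold pd
  rw [fderiv_fun_add ((hdvf _).differentiable (by simp) z)
      ((Differentiable.fun_sum (fun j _ => ((huj j).mul (hdvf _)).differentiable (by simp))) z)]
  rw [ContinuousLinearMap.add_apply]
  rw [fderiv_fun_sum (fun j _ => ((huj j).mul (hdvf _)).differentiable (by simp) z)]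
  rw [ContinuousLinearMap.sum_apply]
  have hprod : ∀ j : Fin 3,
      fderiv ℝ (fun y => u y j * fderiv ℝ f y ((0:ℝ), Pi.single j 1)) z ((0:ℝ), Pi.single i 1)
        = fderiv ℝ (fun q => u q j) z ((0:ℝ), Pi.single i 1) * fderiv ℝ f z ((0:ℝ), Pi.single j 1)
          + u z j * fderiv ℝ (fun y => fderiv ℝ f y ((0:ℝ), Pi.single i 1)) z
              ((0:ℝ), Pi.single j 1) := by
    intro j
    rw [dv_mul _ _ z _ ((huj j).differentiable (by simp) z) ((hdvf _).differentiable (by simp) z)]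
    rw [dv_comm f hf z _ _]
  simp only [hprod]
  rw [dv_comm f hf z _ _]
  rw [mder_expand u (fun y => fderiv ℝ f y ((0:ℝ), Pi.single i 1)) z]
  rw [Finset.sum_add_distrib]
  unfold pd
  ring

/-- Transport of the antisymmetric part of the velocity gradient along an
Euler flow. -/
lemma transport (u : Pt → Fin 3 → ℝ) (p : Pt → ℝ)
    (hu : ContDiff ℝ (⊤ : ℕ∞) u) (hp : ContDiff ℝ (⊤ : ℕ∞) p)
    (heuler : ∀ z i, mder u (fun q => u q i) z = - pd i p z)
    (k l : Fin 3) (z : Pt) :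
    mder u (fun q => pd k (fun y => u y l) q - pd l (fun y => u y k) q) z
      = ∑ j : Fin 3, (pd l (fun y => u y j) z * pd j (fun y => u y k) z
          - pd k (fun y => u y j) z * pd j (fun y => u y l) z) := by
  have huj : ∀ j, ContDiff ℝ (⊤ : ℕ∞) (fun q => u q j) := fun j => contDiff_pi.mp hu j
  have hpdd : ∀ (m : Fin 3) (j : Fin 3), Differentiable ℝ (pd m (fun y => u y j)) :=
    fun m j => (smooth_dv _ (huj j) _).differentiable (by simp)
  have hsplit : mder u (fun q => pd k (fun y => u y l) q - pd l (fun y => u y k) q) z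
      = mder u (pd k (fun y => u y l)) z - mder u (pd l (fun y => u y k)) z := by
    unfold mder
    rw [fderiv_fun_sub (hpdd k l z) (hpdd l k z)]
    rfl
  have hkey : ∀ m j : Fin 3, mder u (pd m (fun y => u y j)) z
      = pd m (fun y => mder u (fun q => u q j) y) z
        - ∑ r : Fin 3, pd m (fun q => u q r) z * pd r (fun y => u y j) z := by
    intro m j
    have := pd_mder u hu (fun y => u y j) (huj j) m z
    linarith [this]
  have hpress : ∀ m j : Fin 3,
      pd m (fun y => mder u (fun q => u q j) y) z = - pd m (pd j p) z := by
    intro m j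
    have : (fun y => mder u (fun q => u q j) y) = fun y => - pd j p y :=
      funext fun y => heuler y j
    rw [this]
    unfold pd
    rw [fderiv_fun_neg]
    rfl
  rw [hsplit, hkey k l, hkey l k, hpress, hpress]
  have hcomm : pd k (pd l p) z = pd l (pd k p) z := dv_comm p hp z _ _
  rw [hcomm, Finset.sum_sub_distrib]
  ring

/-- The core quaternionic algebra identity. -/
lemma quat_alg (n : ℝ) (hn : n ≠ 0) (w sw : Fin 3 → ℝ) (hn2 : n * n = dot3 w w) :
    quat 0 sw = quat (dot3 (n⁻¹ • w) (n⁻¹ • sw)) (cross3 (n⁻¹ • w) (n⁻¹ • sw))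
      * quat 0 w := by
  have hc : n⁻¹ * n⁻¹ * dot3 w w = 1 := by
    rw [← hn2]; field_simp
  unfold dot3 at hc
  apply Quaternion.ext <;>
    simp only [Quaternion.re_mul, Quaternion.imI_mul, Quaternion.imJ_mul,
      Quaternion.imK_mul] <;>
    simp only [quat, dot3, cross3, Pi.smul_apply, smul_eq_mul,
      Matrix.cons_val_zero, Matrix.cons_val_one, Matrix.head_cons,
      Matrix.cons_val_two, Matrix.tail_cons]
  · ring
  · linear_combination (- sw 0) * hc
  · linear_combination (- sw 1) * hc
  · linear_combination (- sw 2) * hc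

/-- Theorem 1, first relation: for a smooth Euler solution, at
every point where `ω ≠ 0`, `[0, Dω/Dt] = [α, χ] * [0, ω]`. -/
theorem vorticity_tetrad_evolution
    (u : Pt → Fin 3 → ℝ) (p : Pt → ℝ)
    (hu : ContDiff ℝ (⊤ : ℕ∞) u) (hp : ContDiff ℝ (⊤ : ℕ∞) p)
    (heuler : ∀ z i, mder u (fun q => u q i) z = - pd i p z)
    (hdiv : ∀ z, ∑ i : Fin 3, pd i (fun q => u q i) z = 0)
    (z : Pt) (hω : vort u z ≠ 0) :
    quat 0 (fun i => mder u (fun q => vort u q i) z) =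
      quat (alphaF u z) (chiF u z) * quat 0 (vort u z) := by
  have hd3 : pd 0 (fun q => u q 0) z + pd 1 (fun q => u q 1) z + pd 2 (fun q => u q 2) z = 0 := by
    have := hdiv z
    rwa [Fin.sum_univ_three] at this
  -- Step 1: the vorticity equation Dω/Dt = Sω.
  have hvort : ∀ i, mder u (fun q => vort u q i) z = strainVec u z (vort u z) i := by
    intro i
    fin_cases i
    · show mder u (fun q => vort u q 0) z = strainVec u z (vort u z) 0
      have h0 : (fun q => vort u q 0)
          = fun q => pd 1 (fun y => u y 2) q - pd 2 (fun y => u y 1) q := by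
        funext q; simp [vort]
      rw [h0, transport u p hu hp heuler 1 2 z]
      simp only [strainVec, vort, Fin.sum_univ_three, Matrix.cons_val_zero,
        Matrix.cons_val_one, Matrix.head_cons, Matrix.cons_val_two, Matrix.tail_cons]
      linear_combination (pd 2 (fun y => u y 1) z - pd 1 (fun y => u y 2) z) * hd3
    · show mder u (fun q => vort u q 1) z = strainVec u z (vort u z) 1
      have h0 : (fun q => vort u q 1)
          = fun q => pd 2 (fun y => u y 0) q - pd 0 (fun y => u y 2) q := by
        funext q; simp [vort]
      rw [h0, transport u p hu hp heuler 2 0 z]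
      simp only [strainVec, vort, Fin.sum_univ_three, Matrix.cons_val_zero,
        Matrix.cons_val_one, Matrix.head_cons, Matrix.cons_val_two, Matrix.tail_cons]
      linear_combination (pd 0 (fun y => u y 2) z - pd 2 (fun y => u y 0) z) * hd3
    · show mder u (fun q => vort u q 2) z = strainVec u z (vort u z) 2
      have h0 : (fun q => vort u q 2)
          = fun q => pd 0 (fun y => u y 1) q - pd 1 (fun y => u y 0) q := by
        funext q; simp [vort]
      rw [h0, transport u p hu hp heuler 0 1 z]
      simp only [strainVec, vort, Fin.sum_univ_three, Matrix.cons_val_zero,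
        Matrix.cons_val_one, Matrix.head_cons, Matrix.cons_val_two, Matrix.tail_cons]
      linear_combination (pd 1 (fun y => u y 0) z - pd 0 (fun y => u y 1) z) * hd3
  -- Step 2: positivity of |ω|.
  have hpos : 0 < dot3 (vort u z) (vort u z) := by
    obtain ⟨i, hi⟩ := Function.ne_iff.mp hω
    have h0 := mul_self_nonneg (vort u z 0)
    have h1 := mul_self_nonneg (vort u z 1)
    have h2 := mul_self_nonneg (vort u z 2)
    unfold dot3
    fin_cases i
    · replace hi : vort u z 0 ≠ 0 := hi
      nlinarith [mul_self_pos.mpr hi]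
    · replace hi : vort u z 1 ≠ 0 := hi
      nlinarith [mul_self_pos.mpr hi]
    · replace hi : vort u z 2 ≠ 0 := hi
      nlinarith [mul_self_pos.mpr hi]
  have hn : norm3 (vort u z) ≠ 0 := by
    unfold norm3
    positivity
  have hn2 : norm3 (vort u z) * norm3 (vort u z) = dot3 (vort u z) (vort u z) :=
    Real.mul_self_sqrt hpos.le
  -- Step 3: scaling of the strain.
  have hS : strainVec u z ((norm3 (vort u z))⁻¹ • vort u z)
      = (norm3 (vort u z))⁻¹ • strainVec u z (vort u z) := by
    funext i
    simp only [strainVec, Fin.sum_univ_three, Pi.smul_apply, smul_eq_mul]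
    ring
  -- Step 4: assemble.
  rw [show (fun i => mder u (fun q => vort u q i) z) = strainVec u z (vort u z)
    from funext hvort]
  unfold alphaF chiF vortHat
  rw [hS]
  exact quat_alg (norm3 (vort u z)) hn (vort u z) (strainVec u z (vort u z)) hn2
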